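/- arXiv:math/0410338 — 4 statements merged into one kernel-verified Lean document; each statement's English description precedes it below -/
import Mathlib

section
/- Let G be a group, c : G → ℝ subadditive, conjugation-invariant (c(ψφψ^{-1}) = c(φ) for all φ, ψ), with c(1) bounded, and suppose the homogenization μ(φ) = −lim_{k→∞} c(φ^k)/k exists for all φ ∈ G. Suppose φ ∈ G satisfies |c(φ_1⋯φ_kψ) − Σc(φ_i) − c(ψ)| ≤ Ck whenever each φ_i is a conjugate of φ. Then for all ψ ∈ G: |μ(φψ) − μ(φ) − μ(ψ)| ≤ 2C. -/
/-!
Telescoping gives `(φψ)^k = (∏_{i<k} ψ^i φ ψ^{-i}) · ψ^k`, so the hypothesis on products of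
conjugates of `φ` yields `|c((φψ)^k) - k c(φ) - c(ψ^k)| ≤ C k`; dividing by `k` and letting
`k → ∞` gives `|μ(φψ) - μ(ψ) + c(φ)| ≤ C`. The case `ψ = 1` gives `|μ(φ) + c(φ)| ≤ C`, and the
two combine to the bound `2C`.
-/

open Filter

theorem List.prod_ofFn_conj_pow_mul_pow {G : Type*} [Group G] (φ ψ : G) (k : ℕ) :
    (List.ofFn fun i : Fin k => ψ ^ (i : ℕ) * φ * (ψ ^ (i : ℕ))⁻¹).prod * ψ ^ k
      = (φ * ψ) ^ k := by
  induction k with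
  | zero => simp
  | succ k ih =>
    rw [List.ofFn_succ', List.concat_eq_append, List.prod_append, pow_succ (φ * ψ), ← ih]
    simp only [Fin.val_castSucc, Fin.val_last, List.prod_cons, List.prod_nil, pow_succ]
    group

theorem abs_sub_sub_le_of_tendsto_div {a b : ℕ → ℝ} {x A B C : ℝ}
    (h : ∀ k : ℕ, |a k - k * x - b k| ≤ C * k)
    (ha : Tendsto (fun k : ℕ => a k / k) atTop (nhds A))
    (hb : Tendsto (fun k : ℕ => b k / k) atTop (nhds B)) :
    |A - x - B| ≤ C := by
  have hdiv : ∀ k : ℕ, 1 ≤ k → |a k / k - x - b k / k| ≤ C := by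
    intro k hk
    have hk0 : (0 : ℝ) < k := by exact_mod_cast hk
    have : a k / k - x - b k / k = (a k - k * x - b k) / k := by field_simp
    rw [this, abs_div, abs_of_pos hk0, div_le_iff₀ hk0]
    exact h k
  exact le_of_tendsto ((ha.sub tendsto_const_nhds).sub hb).abs
    (eventually_atTop.2 ⟨1, hdiv⟩)

theorem abs_map_mul_pow_sub_le {G : Type*} [Group G] {c : G → ℝ} {φ : G} {C : ℝ}
    (hconj : ∀ φ ψ : G, c (ψ * φ * ψ⁻¹) = c φ)
    (hprod : ∀ (k : ℕ) (φs : Fin k → G) (ψ : G),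
      (∀ i, ∃ g : G, φs i = g * φ * g⁻¹) →
      |c ((List.ofFn φs).prod * ψ) - (∑ i, c (φs i)) - c ψ| ≤ C * k)
    (ψ : G) (k : ℕ) :
    |c ((φ * ψ) ^ k) - k * c φ - c (ψ ^ k)| ≤ C * k := by
  have h := hprod k (fun i => ψ ^ (i : ℕ) * φ * (ψ ^ (i : ℕ))⁻¹) (ψ ^ k)
    (fun i => ⟨ψ ^ (i : ℕ), rfl⟩)
  simpa only [List.prod_ofFn_conj_pow_mul_pow, hconj, Finset.sum_const, Finset.card_univ,
    Fintype.card_fin, nsmul_eq_mul] using h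

theorem controlled_quasi_additivity_base_general
    {G : Type*} [Group G] (c : G → ℝ) (μ : G → ℝ) (C : ℝ)
    (hconj : ∀ φ ψ : G, c (ψ * φ * ψ⁻¹) = c φ)
    (hμ : ∀ φ : G, Tendsto (fun k : ℕ => c (φ ^ k) / k) atTop (nhds (-μ φ)))
    (φ : G)
    (hprod : ∀ (k : ℕ) (φs : Fin k → G) (ψ : G),
      (∀ i, ∃ g : G, φs i = g * φ * g⁻¹) →
      |c ((List.ofFn φs).prod * ψ) - (∑ i, c (φs i)) - c ψ| ≤ C * k) :
    ∀ ψ : G, |μ (φ * ψ) - μ φ - μ ψ| ≤ 2 * C := by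
  intro ψ
  have hψ := abs_sub_sub_le_of_tendsto_div (abs_map_mul_pow_sub_le hconj hprod ψ)
    (hμ (φ * ψ)) (hμ ψ)
  have hone := abs_sub_sub_le_of_tendsto_div
    (by simpa only [mul_one, one_pow] using abs_map_mul_pow_sub_le hconj hprod 1)
    (hμ φ) (tendsto_const_div_atTop_nhds_zero_nat (c 1))
  rw [abs_le] at hψ hone ⊢
  constructor <;> linarith [hψ.1, hψ.2, hone.1, hone.2]

/-- Base case of controlled quasi-additivity: if `c` is subadditive,
conjugation-invariant, with `c 1` bounded, whose homogenization
`μ φ = - lim c (φ ^ k) / k` exists, and `φ` satisfies the product estimate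
against arbitrary tuples of its conjugates, then `|μ (φψ) - μ φ - μ ψ| ≤ 2C`. -/
theorem controlled_quasi_additivity_base
    {G : Type*} [Group G] (c : G → ℝ) (μ : G → ℝ) (C : ℝ) (hC : 0 ≤ C)
    (hsub : ∀ φ ψ : G, c (φ * ψ) ≤ c φ + c ψ)
    (hconj : ∀ φ ψ : G, c (ψ * φ * ψ⁻¹) = c φ)
    (hone : ∃ B : ℝ, |c 1| ≤ B)
    (hμ : ∀ φ : G, Tendsto (fun k : ℕ => c (φ ^ k) / k) atTop (nhds (-μ φ)))
    (φ : G)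
    (hprod : ∀ (k : ℕ) (φs : Fin k → G) (ψ : G),
      (∀ i, ∃ g : G, φs i = g * φ * g⁻¹) →
      |c ((List.ofFn φs).prod * ψ) - (∑ i, c (φs i)) - c ψ| ≤ C * k) :
    ∀ ψ : G, |μ (φ * ψ) - μ φ - μ ψ| ≤ 2 * C :=
  controlled_quasi_additivity_base_general c μ C hconj hμ φ hprod
end

section
/- Let G be a group and μ : G → ℝ a function with μ(φ^m) = mμ(φ) for all m ∈ ℤ_{≥0}. Let ‖·‖ : G → ℤ_{≥0} be a conjugation-invariant norm-like function (‖φψ‖ ≤ ‖φ‖ + ‖ψ‖, ‖φ‖ = 0 iff φ = 1). Suppose for all φ, ψ ≠ 1 with min(‖φ‖, ‖ψ‖) = 1 we have |μ(φψ) − μ(φ) − μ(ψ)| ≤ 2C. Then by induction, for all φ, ψ ≠ 1: |μ(φψ) − μ(φ) − μ(ψ)| ≤ 2C·min(2‖φ‖ − 1, 2‖ψ‖ − 1), provided every φ with ‖φ‖ = m+1 decomposes as φ = φ_m φ_1 with ‖φ_m‖ = m and ‖φ_1‖ = 1. -/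
/-!
Write `D(φ, ψ) = μ(φψ) - μ φ - μ ψ`. It satisfies the cocycle identity
`D(a, b) + D(ab, c) = D(a, bc) + D(b, c)`. Splitting `φ = a b` with `‖a‖ = ‖φ‖ - 1` and
`‖b‖ = 1` and reading the identity as `D(ab, ψ) = D(a, bψ) + D(b, ψ) - D(a, b)`, one step of
induction on `‖φ‖` costs two applications of the base estimate, i.e. `4C`; this gives
`|D(φ, ψ)| ≤ 2C (2‖φ‖ - 1)`, and the mirror argument on `D(φ, ab)` gives the bound in `‖ψ‖`.
Since `μ 1 = 0`, the defect vanishes when a factor is trivial, so the base estimate holds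
whenever one factor has norm one.
-/

section MulDefect

variable {G : Type*} [Group G] (μ : G → ℝ)

def mulDefect (φ ψ : G) : ℝ := μ (φ * ψ) - μ φ - μ ψ

theorem mulDefect_cocycle (a b c : G) :
    mulDefect μ a b + mulDefect μ (a * b) c = mulDefect μ a (b * c) + mulDefect μ b c := by
  simp only [mulDefect, mul_assoc]
  ring

variable {μ}

theorem mulDefect_one_left (hμ : μ 1 = 0) (ψ : G) : mulDefect μ 1 ψ = 0 := by
  simp [mulDefect, hμ]

theorem mulDefect_one_right (hμ : μ 1 = 0) (φ : G) : mulDefect μ φ 1 = 0 := by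
  simp [mulDefect, hμ]

theorem abs_mulDefect_le_of_ne_one (hμ : μ 1 = 0) {c : ℝ} (hc : 0 ≤ c) {φ ψ : G}
    (h : φ ≠ 1 → ψ ≠ 1 → |mulDefect μ φ ψ| ≤ c) : |mulDefect μ φ ψ| ≤ c := by
  rcases eq_or_ne φ 1 with rfl | hφ
  · simpa [mulDefect_one_left hμ] using hc
  rcases eq_or_ne ψ 1 with rfl | hψ
  · simpa [mulDefect_one_right hμ] using hc
  exact h hφ hψ

variable {ν : G → ℕ} {C : ℝ}
  (hbase : ∀ φ ψ : G, ν φ = 1 ∨ ν ψ = 1 → |mulDefect μ φ ψ| ≤ 2 * C)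
  (hdecomp : ∀ (φ : G) (m : ℕ), ν φ = m + 1 → ∃ a b : G, φ = a * b ∧ ν a = m ∧ ν b = 1)
include hbase hdecomp

theorem abs_mulDefect_le_of_norm_left_eq (n : ℕ) :
    ∀ φ ψ : G, ν φ = n + 1 → |mulDefect μ φ ψ| ≤ 2 * C * (2 * n + 1) := by
  induction n with
  | zero => intro φ ψ hφ; simpa using hbase φ ψ (.inl hφ)
  | succ k ih =>
    intro φ ψ hφ
    obtain ⟨a, b, rfl, ha, hb⟩ := hdecomp _ _ hφ
    have hsplit : mulDefect μ (a * b) ψ =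
        mulDefect μ a (b * ψ) + mulDefect μ b ψ - mulDefect μ a b := by
      linarith [mulDefect_cocycle μ a b ψ]
    have h₁ := abs_le.mp (ih a (b * ψ) ha)
    have h₂ := abs_le.mp (hbase b ψ (.inl hb))
    have h₃ := abs_le.mp (hbase a b (.inr hb))
    rw [hsplit, abs_le]
    push_cast
    constructor <;> linarith [h₁.1, h₁.2, h₂.1, h₂.2, h₃.1, h₃.2]

theorem abs_mulDefect_le_of_norm_right_eq (n : ℕ) :
    ∀ φ ψ : G, ν ψ = n + 1 → |mulDefect μ φ ψ| ≤ 2 * C * (2 * n + 1) := by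
  induction n with
  | zero => intro φ ψ hψ; simpa using hbase φ ψ (.inr hψ)
  | succ k ih =>
    intro φ ψ hψ
    obtain ⟨a, b, rfl, ha, hb⟩ := hdecomp _ _ hψ
    have hsplit : mulDefect μ φ (a * b) =
        mulDefect μ (φ * a) b + mulDefect μ φ a - mulDefect μ a b := by
      linarith [mulDefect_cocycle μ φ a b]
    have h₁ := abs_le.mp (ih φ a ha)
    have h₂ := abs_le.mp (hbase (φ * a) b (.inr hb))
    have h₃ := abs_le.mp (hbase a b (.inr hb))
    rw [hsplit, abs_le]
    push_cast
    constructor <;> linarith [h₁.1, h₁.2, h₂.1, h₂.2, h₃.1, h₃.2]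

end MulDefect

theorem controlled_quasi_additivity_induction_general
    {G : Type*} [Group G] (μ : G → ℝ) (ν : G → ℕ) (C : ℝ) (hC : 0 ≤ C)
    (hhom : ∀ (φ : G) (m : ℕ), μ (φ ^ m) = m * μ φ)
    (hνzero : ∀ φ : G, ν φ = 0 ↔ φ = 1)
    (hbase : ∀ φ ψ : G, φ ≠ 1 → ψ ≠ 1 → min (ν φ) (ν ψ) = 1 →
      |μ (φ * ψ) - μ φ - μ ψ| ≤ 2 * C)
    (hdecomp : ∀ (φ : G) (m : ℕ), ν φ = m + 1 →
      ∃ a b : G, φ = a * b ∧ ν a = m ∧ ν b = 1) :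
    ∀ φ ψ : G, φ ≠ 1 → ψ ≠ 1 →
      |μ (φ * ψ) - μ φ - μ ψ| ≤
        2 * C * min (2 * (ν φ : ℝ) - 1) (2 * (ν ψ : ℝ) - 1) := by
  have hμ : μ 1 = 0 := by simpa using hhom 1 0
  have hbase' : ∀ φ ψ : G, ν φ = 1 ∨ ν ψ = 1 → |mulDefect μ φ ψ| ≤ 2 * C := by
    intro φ ψ hone
    refine abs_mulDefect_le_of_ne_one hμ (by positivity) fun hφ hψ ↦ hbase φ ψ hφ hψ ?_
    have := (hνzero φ).not.mpr hφ
    have := (hνzero ψ).not.mpr hψ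
    omega
  intro φ ψ hφ hψ
  obtain ⟨n, hn⟩ := Nat.exists_eq_add_one_of_ne_zero ((hνzero φ).not.mpr hφ)
  obtain ⟨m, hm⟩ := Nat.exists_eq_add_one_of_ne_zero ((hνzero ψ).not.mpr hψ)
  rw [mul_min_of_nonneg _ _ (by positivity), hn, hm]
  push_cast
  refine le_min ?_ ?_
  · exact (abs_mulDefect_le_of_norm_left_eq hbase' hdecomp n φ ψ hn).trans_eq (by ring)
  · exact (abs_mulDefect_le_of_norm_right_eq hbase' hdecomp m φ ψ hm).trans_eq (by ring)

/-- Induction step of controlled quasi-additivity: given a semi-homogeneous `μ`, a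
conjugation-invariant fragmentation norm `ν`, the base estimate for elements of
norm one, and existence of decompositions `φ = φ_m * φ_1`, one gets
`|μ (φψ) - μ φ - μ ψ| ≤ 2C * min (2‖φ‖ - 1) (2‖ψ‖ - 1)` for all `φ, ψ ≠ 1`. -/
theorem controlled_quasi_additivity_induction
    {G : Type*} [Group G] (μ : G → ℝ) (ν : G → ℕ) (C : ℝ) (hC : 0 ≤ C)
    (hhom : ∀ (φ : G) (m : ℕ), μ (φ ^ m) = m * μ φ)
    (hνsub : ∀ φ ψ : G, ν (φ * ψ) ≤ ν φ + ν ψ)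
    (hνzero : ∀ φ : G, ν φ = 0 ↔ φ = 1)
    (hνconj : ∀ φ ψ : G, ν (ψ * φ * ψ⁻¹) = ν φ)
    (hbase : ∀ φ ψ : G, φ ≠ 1 → ψ ≠ 1 → min (ν φ) (ν ψ) = 1 →
      |μ (φ * ψ) - μ φ - μ ψ| ≤ 2 * C)
    (hdecomp : ∀ (φ : G) (m : ℕ), ν φ = m + 1 →
      ∃ a b : G, φ = a * b ∧ ν a = m ∧ ν b = 1) :
    ∀ φ ψ : G, φ ≠ 1 → ψ ≠ 1 →
      |μ (φ * ψ) - μ φ - μ ψ| ≤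
        2 * C * min (2 * (ν φ : ℝ) - 1) (2 * (ν ψ : ℝ) - 1) :=
  controlled_quasi_additivity_induction_general μ ν C hC hhom hνzero hbase hdecomp
end

section
/- Let G be a group, μ : G → ℝ with μ(φ^m) = mμ(φ) for m ∈ ℤ_{≥0}, and suppose |μ(αβ) − μ(α) − μ(β)| ≤ K whenever ‖α‖_U = 1 or ‖β‖_U = 1 (for some length function ‖·‖_U with ‖φ^k‖_U ≤ ‖φ‖_U). If φ, θ ∈ G commute and ‖θ^k‖_U = 1 for all k ∈ ℕ, then μ(φθ) = μ(φ) + μ(θ). -/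
/-! Since `φ` and `θ` commute, `(φθ)^k = φ^k θ^k`, and homogeneity of `μ` turns the defect
`μ(φθ) - μ φ - μ θ` of the pair `(φ, θ)` into `1/k` times the defect of `(φ^k, θ^k)`. The latter is
at most `K` in absolute value because `‖θ^k‖_U = 1`, so the defect is at most `K/k` for every `k`,
hence zero. -/

theorem eq_zero_of_forall_nsmul_abs_le {α : Type*} [AddCommGroup α] [LinearOrder α]
    [IsOrderedAddMonoid α] [Archimedean α] {a c : α} (h : ∀ n : ℕ, 0 < n → n • |a| ≤ c) :
    a = 0 := by
  by_contra ha
  have hpos : 0 < |a| := abs_pos.mpr ha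
  obtain ⟨n, hn⟩ := Archimedean.arch c hpos
  have hsucc : n • |a| + |a| ≤ c := succ_nsmul |a| n ▸ h (n + 1) n.succ_pos
  exact (lt_add_of_pos_right _ hpos).not_ge (hsucc.trans hn)

section Defect

variable {G : Type*} [Group G]

def additivityDefect (μ : G → ℝ) (α β : G) : ℝ :=
  μ (α * β) - μ α - μ β

theorem additivityDefect_pow_of_commute {μ : G → ℝ} (hhom : ∀ (φ : G) (m : ℕ), μ (φ ^ m) = m * μ φ)
    {φ θ : G} (hcomm : Commute φ θ) (k : ℕ) :
    additivityDefect μ (φ ^ k) (θ ^ k) = k • additivityDefect μ φ θ := by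
  simp only [additivityDefect, ← hcomm.mul_pow, hhom, nsmul_eq_mul]
  ring

end Defect

theorem partial_additivity_general
    {G : Type*} [Group G] (μ : G → ℝ) (ν : G → ℕ) (K : ℝ)
    (hhom : ∀ (φ : G) (m : ℕ), μ (φ ^ m) = m * μ φ)
    (hK : ∀ α β : G, (ν α = 1 ∨ ν β = 1) → |μ (α * β) - μ α - μ β| ≤ K)
    (φ θ : G)
    (hθ : ∀ k : ℕ, 0 < k → ν (θ ^ k) = 1)
    (hcomm : φ * θ = θ * φ) :
    μ (φ * θ) = μ φ + μ θ := by
  have hbound : ∀ k : ℕ, 0 < k → k • |additivityDefect μ φ θ| ≤ K := fun k hk => by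
    rw [← abs_nsmul, ← additivityDefect_pow_of_commute hhom hcomm]
    exact hK _ _ (Or.inr (hθ k hk))
  have hzero : additivityDefect μ φ θ = 0 := eq_zero_of_forall_nsmul_abs_le hbound
  rw [additivityDefect] at hzero
  linarith

/-- Partial additivity from controlled quasi-additivity: if `μ` is
semi-homogeneous, the quasi-additivity defect is bounded by `K` whenever one of
the factors has fragmentation norm `1`, powers do not increase the norm,
`‖θ^k‖_U = 1` for all `k ≥ 1`, and `φ` commutes with `θ`, then
`μ (φθ) = μ φ + μ θ`. -/
theorem partial_additivity
    {G : Type*} [Group G] (μ : G → ℝ) (ν : G → ℕ) (K : ℝ)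
    (hhom : ∀ (φ : G) (m : ℕ), μ (φ ^ m) = m * μ φ)
    (hK : ∀ α β : G, (ν α = 1 ∨ ν β = 1) → |μ (α * β) - μ α - μ β| ≤ K)
    (hνpow : ∀ (φ : G) (k : ℕ), ν (φ ^ k) ≤ ν φ)
    (φ θ : G)
    (hθ : ∀ k : ℕ, 0 < k → ν (θ ^ k) = 1)
    (hcomm : φ * θ = θ * φ) :
    μ (φ * θ) = μ φ + μ θ :=
  partial_additivity_general μ ν K hhom hK φ θ hθ hcomm
end

section
/- If X ⊆ M and Y ⊆ N are stems (fibers of finite-dimensional Poisson-commutative subspaces all of whose other fibers are displaceable) in closed symplectic manifolds M and N, then X × Y is a stem in M × N with the product symplectic structure. -/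
/-- `X` is a stem with respect to a Poisson-commutation relation `P` on functions
and a displaceability predicate `D`: it is a fiber of the moment map of a
finite-dimensional Poisson-commutative subspace (spanned by `F 0, …, F (n-1)`)
all of whose other fibers are displaceable. -/
def IsStem {M : Type*} (P : (M → ℝ) → (M → ℝ) → Prop) (D : Set M → Prop)
    (X : Set M) : Prop :=
  ∃ (n : ℕ) (F : Fin n → M → ℝ) (p : Fin n → ℝ),
    (∀ i j, P (F i) (F j)) ∧
    X = {x | ∀ i, F i x = p i} ∧
    ∀ q : Fin n → ℝ, q ≠ p → D {x | ∀ i, F i x = q i}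

/-! The product of the two moment maps, `(F, G) ∘ (fst, snd)`, Poisson-commutes by the lifting
hypotheses, and its fiber over `(p', q')` is the product of the fiber of `F` over `p'` and that
of `G` over `q'`. Over `(p, q)` this is `X × Y`; over any other value one of `p' ≠ p`, `q' ≠ q`
holds, so one factor is displaceable and hence so is the product. -/

theorem setOf_forall_append_comp_eq_append {M N α : Type*} {m n : ℕ}
    (F : Fin m → M → α) (G : Fin n → N → α) (p : Fin m → α) (q : Fin n → α) :
    {z : M × N | ∀ k, Fin.append (fun i => F i ∘ Prod.fst) (fun j => G j ∘ Prod.snd) k z =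
      Fin.append p q k} = {x | ∀ i, F i x = p i} ×ˢ {y | ∀ j, G j y = q j} := by
  ext ⟨x, y⟩
  simp only [Set.mem_ofPred_eq, Set.mem_prod, Fin.forall_fin_add, Fin.append_left,
    Fin.append_right, Function.comp_apply]

/-- A product of stems is a stem: if products of displaceable sets with arbitrary
sets are displaceable in the product, and lifts of Poisson-commuting functions
from the factors Poisson-commute in the product, then `X × Y` is a stem in
`M × N` whenever `X`, `Y` are stems in `M`, `N`. -/
theorem isStem_prod
    {M N : Type*}
    (PM : (M → ℝ) → (M → ℝ) → Prop) (PN : (N → ℝ) → (N → ℝ) → Prop)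
    (PMN : (M × N → ℝ) → (M × N → ℝ) → Prop)
    (DM : Set M → Prop) (DN : Set N → Prop) (DMN : Set (M × N) → Prop)
    (hDM : ∀ (A : Set M) (B : Set N), DM A → DMN (A ×ˢ B))
    (hDN : ∀ (A : Set M) (B : Set N), DN B → DMN (A ×ˢ B))
    (hlift₁ : ∀ F G : M → ℝ, PM F G → PMN (F ∘ Prod.fst) (G ∘ Prod.fst))
    (hlift₂ : ∀ F G : N → ℝ, PN F G → PMN (F ∘ Prod.snd) (G ∘ Prod.snd))
    (hcross : ∀ (F : M → ℝ) (G : N → ℝ),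
      PMN (F ∘ Prod.fst) (G ∘ Prod.snd) ∧ PMN (G ∘ Prod.snd) (F ∘ Prod.fst))
    {X : Set M} {Y : Set N}
    (hX : IsStem PM DM X) (hY : IsStem PN DN Y) :
    IsStem PMN DMN (X ×ˢ Y) := by
  obtain ⟨m, F, p, hF, rfl, hXdisp⟩ := hX
  obtain ⟨n, G, q, hG, rfl, hYdisp⟩ := hY
  refine ⟨m + n, Fin.append (fun i => F i ∘ Prod.fst) (fun j => G j ∘ Prod.snd),
    Fin.append p q, ?_, (setOf_forall_append_comp_eq_append F G p q).symm, ?_⟩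
  · simp only [Fin.forall_fin_add, Fin.append_left, Fin.append_right]
    exact ⟨fun i => ⟨fun j => hlift₁ _ _ (hF i j), fun j => (hcross (F i) (G j)).1⟩,
      fun j => ⟨fun i => (hcross (F i) (G j)).2, fun j' => hlift₂ _ _ (hG j j')⟩⟩
  · intro r hr
    rw [← Fin.append_castAdd_natAdd (f := r)] at hr ⊢
    rw [setOf_forall_append_comp_eq_append]
    by_cases hp : (fun i => r (Fin.castAdd n i)) = p
    · rw [hp] at hr
      exact hDN _ _ (hYdisp _ fun hq => hr (by rw [hq]))
    · exact hDM _ _ (hXdisp _ hp)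
end
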